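/- Let X be a compactum and x₀ ∈ X. Then (X, x₀) is a pointed approximative absolute retract if and only if the following holds: whenever Z is a closed subset of a compactum Y, z₀ ∈ Z, and f : Z → X is continuous with f(z₀) = x₀, there is a sequence of continuous maps gₙ : Y → X such that gₙ(z₀) = x₀ for all n and the restrictions of gₙ to Z converge uniformly to f (with respect to any compatible metric on X). -/

import Mathlib

open Filter Topology Set TopologicalSpace

/-- `F n` converges uniformly to `f` with respect to every metric on `X`
compatible with its topology. (On a compactum all compatible metrics are
uniformly equivalent, so this is the usual notion of uniform convergence
"with respect to any compatible metric".) -/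
def TendstoUniformlyCompat {Z X : Type*} [tX : TopologicalSpace X]
    (F : ℕ → Z → X) (f : Z → X) : Prop :=
  ∀ m : MetricSpace X, m.toUniformSpace.toTopologicalSpace = tX →
    @TendstoUniformly Z X ℕ m.toUniformSpace F f atTop

/-- A (compact metrizable) space `X` is an approximative absolute retract:
for every compactum `Y` and every topological embedding `ι : X → Y` with closed
image there is a sequence of continuous maps `rₙ : Y → X` with `rₙ ∘ ι`
converging uniformly to the identity of `X`. -/
def IsAAR (X : Type*) [TopologicalSpace X] : Prop :=
  ∀ (Y : Type*) [TopologicalSpace Y] [CompactSpace Y] [MetrizableSpace Y]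
    (ι : X → Y), Topology.IsEmbedding ι → IsClosed (Set.range ι) →
    ∃ r : ℕ → Y → X, (∀ n, Continuous (r n)) ∧
      TendstoUniformlyCompat (fun n x => r n (ι x)) id

/-- A pointed (compact metrizable) space `(X, x₀)` is a pointed approximative
absolute retract: for every compactum `Y` and every topological embedding
`ι : X → Y` with closed image there is a sequence of continuous maps
`rₙ : Y → X` fixing the base point (`rₙ (ι x₀) = x₀`) with `rₙ ∘ ι`
converging uniformly to the identity of `X`. -/
def IsPointedAAR (X : Type*) [TopologicalSpace X] (x₀ : X) : Prop :=
  ∀ (Y : Type*) [TopologicalSpace Y] [CompactSpace Y] [MetrizableSpace Y]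
    (ι : X → Y), Topology.IsEmbedding ι → IsClosed (Set.range ι) →
    ∃ r : ℕ → Y → X, (∀ n, Continuous (r n)) ∧ (∀ n, r n (ι x₀) = x₀) ∧
      TendstoUniformlyCompat (fun n x => r n (ι x)) id

/-! The proof runs both directions through the Hilbert cube `Q = ULift (ℕ → I)`, lifted to
whatever universe is needed. `Q` contains a closed copy of every compactum, and, being a
product of intervals, it is an absolute extensor, so a pointed map `f : Z → X` from a closed
subset of a compactum `Y` extends to `F : Y → Q ⊇ X`; composing `F` with the approximate
retractions `Q → X` gives the approximate extensions of `f`. Conversely, for `X ⊆ Y ⊆ Q`, the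
approximate extensions of the identity of `X` over `Q`, restricted to `Y`, are approximate
retractions. -/

open unitInterval

universe u v w

instance {X : Type*} [TopologicalSpace X] [MetrizableSpace X] : MetrizableSpace (ULift X) :=
  Homeomorph.ulift.isEmbedding.metrizableSpace

instance {X : Type v} [TopologicalSpace X] [TietzeExtension.{u} X] :
    TietzeExtension.{u} (ULift.{w} X) :=
  .of_homeo Homeomorph.ulift

def HasPointedApproxExtensions (X : Type*) [TopologicalSpace X] (x₀ : X) : Prop :=
  ∀ (Y : Type*) [TopologicalSpace Y] [CompactSpace Y] [MetrizableSpace Y]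
    (Z : Set Y), IsClosed Z → ∀ z₀ : Z, ∀ f : Z → X, Continuous f → f z₀ = x₀ →
    ∃ g : ℕ → Y → X, (∀ n, Continuous (g n)) ∧ (∀ n, g n (z₀ : Y) = x₀) ∧
      TendstoUniformlyCompat (fun n (z : Z) => g n (z : Y)) f

theorem TendstoUniformlyCompat.comp {W Z X : Type*} [TopologicalSpace X] {F : ℕ → Z → X}
    {f : Z → X} (h : TendstoUniformlyCompat F f) (g : W → Z) :
    TendstoUniformlyCompat (fun n => F n ∘ g) (f ∘ g) :=
  fun m hm => (h m hm).comp g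

theorem exists_isClosedEmbedding_hilbertCube (X : Type*) [TopologicalSpace X] [CompactSpace X]
    [MetrizableSpace X] : ∃ e : X → ULift.{u} (ℕ → I), IsClosedEmbedding e := by
  let _ : MetricSpace X := metrizableSpaceMetric X
  obtain ⟨e, he⟩ := Metric.PiNatEmbed.exists_embedding_to_hilbert_cube (X := X)
  exact ⟨ULift.up ∘ e, (continuous_uliftUp.comp he.continuous).isClosedEmbedding
    (ULift.up_injective.comp he.injective)⟩

theorem IsPointedAAR.hasPointedApproxExtensions {X : Type*} [TopologicalSpace X]
    [CompactSpace X] [MetrizableSpace X] {x₀ : X} (h : IsPointedAAR X x₀) :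
    HasPointedApproxExtensions X x₀ := by
  intro Y _ _ _ Z hZ z₀ f hf hf₀
  obtain ⟨e, he⟩ := exists_isClosedEmbedding_hilbertCube X
  obtain ⟨r, hr, hr₀, hrι⟩ := h _ e he.isEmbedding he.isClosed_range
  obtain ⟨F, hF⟩ := ContinuousMap.exists_restrict_eq hZ ⟨e ∘ f, he.continuous.comp hf⟩
  have hFZ (z : Z) : F z = e (f z) := congr($hF z)
  refine ⟨fun n => r n ∘ F, fun n => (hr n).comp F.continuous, fun n => ?_, ?_⟩
  · simp [hFZ, hf₀, hr₀]
  · simpa [Function.comp_def, hFZ] using hrι.comp f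

theorem IsPointedAAR.of_hasPointedApproxExtensions {X : Type*} [TopologicalSpace X] {x₀ : X}
    (h : HasPointedApproxExtensions X x₀) :
    IsPointedAAR X x₀ := by
  intro Y _ _ _ ι hι hιZ
  obtain ⟨j, hj⟩ := exists_isClosedEmbedding_hilbertCube Y
  have hk : IsClosedEmbedding (j ∘ ι) := hj.comp ⟨hι, hιZ⟩
  set k := hk.isEmbedding.toHomeomorph
  obtain ⟨g, hg, hg₀, hgk⟩ := h _ _ hk.isClosed_range (k x₀) k.symm k.continuous_symm
    (k.symm_apply_apply x₀)
  refine ⟨fun n => g n ∘ j, fun n => (hg n).comp hj.continuous, fun n => hg₀ n, ?_⟩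
  simpa [Function.comp_def, k, Function.id_def] using hgk.comp k

theorem statement4 (X : Type*) [TopologicalSpace X] [CompactSpace X] [MetrizableSpace X]
    (x₀ : X) :
    IsPointedAAR X x₀ ↔
      ∀ (Y : Type*) [TopologicalSpace Y] [CompactSpace Y] [MetrizableSpace Y]
        (Z : Set Y), IsClosed Z → ∀ z₀ : Z, ∀ f : Z → X, Continuous f → f z₀ = x₀ →
        ∃ g : ℕ → Y → X, (∀ n, Continuous (g n)) ∧ (∀ n, g n (z₀ : Y) = x₀) ∧
          TendstoUniformlyCompat (fun n (z : Z) => g n (z : Y)) f :=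
  ⟨IsPointedAAR.hasPointedApproxExtensions, IsPointedAAR.of_hasPointedApproxExtensions⟩
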